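/- Let Q be a unital quantale, F : (A,𝔸)→(B,𝔹) a Q-functor, and let C be a Q-closure operator on the contravariant presheaves of 𝔸 and D a Q-closure operator on the contravariant presheaves of 𝔹 (so C maps contravariant presheaves on 𝔸 to contravariant presheaves on 𝔸 with PA(μ,μ') ≤ PA(Cμ,Cμ'), μ(x) ≤ C(μ)(x) for all x, and C(C(μ)) = C(μ), and similarly for D). Define F^→(μ)(y) := ⨆_{x∈A} μ(x)&𝔹(y,Fx) and F^←(λ)(x) := λ(Fx). Then F is continuous, i.e., F^→(C(μ))(y) ≤ D(F^→(μ))(y) for every contravariant presheaf μ on 𝔸 and every y ∈ B, if and only if for every contravariant presheaf λ on 𝔹 with D(λ) = λ one has C(F^←(λ)) = F^←(λ). -/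
import Mathlib


universe u

/-- A unital quantale: a complete lattice with a monoid structure whose multiplication
preserves arbitrary suprema in each variable. -/
class UnitalQuantale (Q : Type u) extends CompleteLattice Q, Monoid Q where
  mul_sSup : ∀ (a : Q) (S : Set Q), a * sSup S = ⨆ b ∈ S, a * b
  sSup_mul : ∀ (S : Set Q) (a : Q), sSup S * a = ⨆ b ∈ S, b * a

variable {Q : Type u} [UnitalQuantale Q]

/-- The left residual `b / a = ⨆ {c | c * a ≤ b}`. -/
def qdivr (b a : Q) : Q := sSup {c : Q | c * a ≤ b}

/-- The right residual `a ∖ b = ⨆ {c | a * c ≤ b}`. -/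
def qdivl (a b : Q) : Q := sSup {c : Q | a * c ≤ b}


lemma qiSup_mul {ι : Sort*} (f : ι → Q) (a : Q) : (⨆ i, f i) * a = ⨆ i, f i * a := by
  rw [iSup, UnitalQuantale.sSup_mul, iSup_range]

lemma qmul_iSup {ι : Sort*} (a : Q) (f : ι → Q) : a * (⨆ i, f i) = ⨆ i, a * f i := by
  rw [iSup, UnitalQuantale.mul_sSup, iSup_range]

lemma qmul_le_mul_left {a b : Q} (c : Q) (h : a ≤ b) : c * a ≤ c * b := by
  have h2 : c * (a ⊔ b) = c * a ⊔ c * b := by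
    have := qmul_iSup c (fun i : Bool => if i then a else b)
    simpa [iSup_bool_eq] using this
  rw [sup_eq_right.mpr h] at h2
  rw [h2]; exact le_sup_left

lemma qmul_le_mul_right {a b : Q} (c : Q) (h : a ≤ b) : a * c ≤ b * c := by
  have h2 : (a ⊔ b) * c = a * c ⊔ b * c := by
    have := qiSup_mul (fun i : Bool => if i then a else b) c
    simpa [iSup_bool_eq] using this
  rw [sup_eq_right.mpr h] at h2
  rw [h2]; exact le_sup_left

lemma qdivr_mul_le (b a : Q) : qdivr b a * a ≤ b := by
  rw [qdivr, UnitalQuantale.sSup_mul]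
  exact iSup₂_le fun c hc => hc

lemma le_qdivr {c a b : Q} (h : c * a ≤ b) : c ≤ qdivr b a := le_sSup h

/-- A `Q`-closure operator (given its enriched monotonicity) is pointwise monotone. -/
lemma qclosure_ptwise_mono {A : Type*} (𝔸 : A → A → Q) (C : (A → Q) → (A → Q))
    (hCmono : ∀ μ μ' : A → Q, (∀ x x', μ x' * 𝔸 x x' ≤ μ x) →
        (∀ x x', μ' x' * 𝔸 x x' ≤ μ' x) →
        (⨅ x, qdivr (μ' x) (μ x)) ≤ ⨅ x, qdivr (C μ' x) (C μ x))
    (μ μ' : A → Q) (hμ : ∀ x x', μ x' * 𝔸 x x' ≤ μ x)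
    (hμ' : ∀ x x', μ' x' * 𝔸 x x' ≤ μ' x)
    (h : ∀ x, μ x ≤ μ' x) : ∀ x, C μ x ≤ C μ' x := by
  have h1 : (1 : Q) ≤ ⨅ x, qdivr (μ' x) (μ x) :=
    le_iInf fun x => le_qdivr (by rw [one_mul]; exact h x)
  have h2 := h1.trans (hCmono μ μ' hμ hμ')
  intro x
  calc C μ x = 1 * C μ x := (one_mul _).symm
    _ ≤ qdivr (C μ' x) (C μ x) * C μ x :=
        qmul_le_mul_right _ (h2.trans (iInf_le _ x))
    _ ≤ C μ' x := qdivr_mul_le _ _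

/-- A `Q`-functor between `Q`-closure spaces is continuous iff inverse images of closed
presheaves are closed (Proposition `F_continuous_condition`). -/
theorem qclosure_continuous_iff {A B : Type*}
    (𝔸 : A → A → Q) (𝔹 : B → B → Q)
    (hArefl : ∀ x, (1 : Q) ≤ 𝔸 x x)
    (hAtrans : ∀ x y z, 𝔸 y z * 𝔸 x y ≤ 𝔸 x z)
    (hBrefl : ∀ y, (1 : Q) ≤ 𝔹 y y)
    (hBtrans : ∀ x y z, 𝔹 y z * 𝔹 x y ≤ 𝔹 x z)
    (F : A → B) (hF : ∀ x x', 𝔸 x x' ≤ 𝔹 (F x) (F x'))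
    (C : (A → Q) → (A → Q)) (D : (B → Q) → (B → Q))
    -- C is a Q-closure operator on the contravariant presheaves of 𝔸
    (hCmaps : ∀ μ : A → Q, (∀ x x', μ x' * 𝔸 x x' ≤ μ x) →
        ∀ x x', C μ x' * 𝔸 x x' ≤ C μ x)
    (hCmono : ∀ μ μ' : A → Q, (∀ x x', μ x' * 𝔸 x x' ≤ μ x) →
        (∀ x x', μ' x' * 𝔸 x x' ≤ μ' x) →
        (⨅ x, qdivr (μ' x) (μ x)) ≤ ⨅ x, qdivr (C μ' x) (C μ x))
    (hCle : ∀ μ : A → Q, (∀ x x', μ x' * 𝔸 x x' ≤ μ x) → ∀ x, μ x ≤ C μ x)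
    (hCidem : ∀ μ : A → Q, (∀ x x', μ x' * 𝔸 x x' ≤ μ x) → C (C μ) = C μ)
    -- D is a Q-closure operator on the contravariant presheaves of 𝔹
    (hDmaps : ∀ lam : B → Q, (∀ y y', lam y' * 𝔹 y y' ≤ lam y) →
        ∀ y y', D lam y' * 𝔹 y y' ≤ D lam y)
    (hDmono : ∀ lam lam' : B → Q, (∀ y y', lam y' * 𝔹 y y' ≤ lam y) →
        (∀ y y', lam' y' * 𝔹 y y' ≤ lam' y) →
        (⨅ y, qdivr (lam' y) (lam y)) ≤ ⨅ y, qdivr (D lam' y) (D lam y))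
    (hDle : ∀ lam : B → Q, (∀ y y', lam y' * 𝔹 y y' ≤ lam y) → ∀ y, lam y ≤ D lam y)
    (hDidem : ∀ lam : B → Q, (∀ y y', lam y' * 𝔹 y y' ≤ lam y) → D (D lam) = D lam) :
    -- continuity of F iff F^← maps D-closed presheaves to C-closed presheaves
    (∀ μ : A → Q, (∀ x x', μ x' * 𝔸 x x' ≤ μ x) →
        ∀ y, (⨆ x, C μ x * 𝔹 y (F x)) ≤ D (fun y' => ⨆ x, μ x * 𝔹 y' (F x)) y) ↔
    (∀ lam : B → Q, (∀ y y', lam y' * 𝔹 y y' ≤ lam y) → D lam = lam →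
        C (fun x => lam (F x)) = fun x => lam (F x)) := by
  -- preliminary facts
  have hFim_pre : ∀ μ : A → Q, (∀ x x', μ x' * 𝔸 x x' ≤ μ x) →
      ∀ y y', (⨆ x, μ x * 𝔹 y' (F x)) * 𝔹 y y' ≤ ⨆ x, μ x * 𝔹 y (F x) := by
    intro μ _ y y'
    rw [qiSup_mul]
    refine iSup_le fun x => le_trans ?_ (le_iSup (fun x => μ x * 𝔹 y (F x)) x)
    rw [mul_assoc]
    exact qmul_le_mul_left _ (hBtrans _ _ _)
  have hFinv_pre : ∀ lam : B → Q, (∀ y y', lam y' * 𝔹 y y' ≤ lam y) →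
      ∀ x x', lam (F x') * 𝔸 x x' ≤ lam (F x) := fun lam hl x x' =>
    le_trans (qmul_le_mul_left _ (hF x x')) (hl _ _)
  constructor
  · intro hcont lam hlam hDlam
    have hν := hFinv_pre lam hlam
    funext x
    refine le_antisymm ?_ (hCle _ hν x)
    have h1 := hcont (fun x => lam (F x)) hν
    have h2 : ∀ y, (⨆ x, lam (F x) * 𝔹 y (F x)) ≤ lam y :=
      fun y => iSup_le fun x => hlam y (F x)
    have h3 : ∀ y, D (fun y' => ⨆ x, lam (F x) * 𝔹 y' (F x)) y ≤ D lam y :=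
      qclosure_ptwise_mono 𝔹 D hDmono _ _ (hFim_pre _ hν) hlam h2
    calc C (fun x => lam (F x)) x
        = C (fun x => lam (F x)) x * 1 := (mul_one _).symm
      _ ≤ C (fun x => lam (F x)) x * 𝔹 (F x) (F x) := qmul_le_mul_left _ (hBrefl _)
      _ ≤ ⨆ x', C (fun x => lam (F x)) x' * 𝔹 (F x) (F x') :=
          le_iSup (fun x' => C (fun x => lam (F x)) x' * 𝔹 (F x) (F x')) x
      _ ≤ D (fun y' => ⨆ x, lam (F x) * 𝔹 y' (F x)) (F x) := h1 _
      _ ≤ D lam (F x) := h3 _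
      _ = lam (F x) := by rw [hDlam]
  · intro hclosed μ hμ y
    set lam := D (fun y' => ⨆ x, μ x * 𝔹 y' (F x)) with hlamdef
    have hFμ_pre := hFim_pre μ hμ
    have hlam_pre : ∀ y y', lam y' * 𝔹 y y' ≤ lam y := hDmaps _ hFμ_pre
    have hlam_closed : D lam = lam := hDidem _ hFμ_pre
    have hCeq : C (fun x => lam (F x)) = fun x => lam (F x) :=
      hclosed lam hlam_pre hlam_closed
    have hμle : ∀ x, μ x ≤ lam (F x) := by
      intro x
      calc μ x = μ x * 1 := (mul_one _).symm
        _ ≤ μ x * 𝔹 (F x) (F x) := qmul_le_mul_left _ (hBrefl _)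
        _ ≤ ⨆ x', μ x' * 𝔹 (F x) (F x') :=
            le_iSup (fun x' => μ x' * 𝔹 (F x) (F x')) x
        _ ≤ lam (F x) := hDle _ hFμ_pre (F x)
    have hC : ∀ x, C μ x ≤ lam (F x) := by
      have h := qclosure_ptwise_mono 𝔸 C hCmono μ (fun x => lam (F x)) hμ
        (hFinv_pre lam hlam_pre) hμle
      intro x; exact (h x).trans_eq (congrFun hCeq x)
    exact iSup_le fun x => le_trans (qmul_le_mul_right _ (hC x)) (hlam_pre y (F x))
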